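/- arXiv:2307.09359 — 2 statements merged into one kernel-verified Lean document; each statement's English description precedes it below -/
import Mathlib

section
/- (Proposition 1, necessity.) Suppose there exist a C¹ map T : ℝ^n → ℝ^v and matrices A ∈ ℝ^{v×v}, B ∈ ℝ^{v×p}, C ∈ ℝ^{1×v}, D ∈ ℝ^{1×p} such that DT(x) F(x) = A T(x) + B H(x) and q(x) = C T(x) + D H(x) for all x ∈ ℝ^n, where the characteristic polynomial of A is λ^v + α₁ λ^{v−1} + ⋯ + α_{v−1} λ + α_v. Then the function L_F^v q + α₁ L_F^{v−1} q + ⋯ + α_{v−1} L_F q + α_v q is an ℝ-linear combination of the functions L_F^i H_j (0 ≤ i ≤ v, 1 ≤ j ≤ p); i.e., there exist row vectors β₀, …, β_v ∈ ℝ^{1×p} such that L_F^v q + α₁ L_F^{v−1} q + ⋯ + α_v q = Σ_{ℓ=0}^{v} L_F^{v−ℓ}(β_ℓ H) pointwise on ℝ^n. -/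
open Matrix Finset Polynomial

/-- Lie derivative of a scalar function `φ` along the vector field `F`:
`(L_F φ)(x) = Dφ(x) F(x)`. -/
noncomputable def lieD {n : ℕ} (F : (Fin n → ℝ) → (Fin n → ℝ))
    (φ : (Fin n → ℝ) → ℝ) : (Fin n → ℝ) → ℝ :=
  fun x => fderiv ℝ φ x (F x)

/-! ### Auxiliary lemmas -/

/-- The dot product with a fixed vector, as a continuous linear map. -/
noncomputable def dotCLM {k : ℕ} (c : Fin k → ℝ) : (Fin k → ℝ) →L[ℝ] ℝ :=
  ∑ i, c i • ContinuousLinearMap.proj i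

@[simp] lemma dotCLM_apply {k : ℕ} (c y : Fin k → ℝ) : dotCLM c y = c ⬝ᵥ y := by
  simp [dotCLM, dotProduct]

lemma hasFDerivAt_dot {m k : ℕ} (c : Fin k → ℝ) {T : (Fin m → ℝ) → (Fin k → ℝ)}
    {x : Fin m → ℝ} {T' : (Fin m → ℝ) →L[ℝ] (Fin k → ℝ)} (h : HasFDerivAt T T' x) :
    HasFDerivAt (fun y => c ⬝ᵥ T y) ((dotCLM c).comp T') x := by
  have h2 := ((dotCLM c).hasFDerivAt (x := T x)).comp x h
  have : (fun y => c ⬝ᵥ T y) = fun y => dotCLM c (T y) := by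
    funext y; simp
  rw [this]
  exact h2

lemma contDiff_dot {m k : ℕ} (c : Fin k → ℝ) {H : (Fin m → ℝ) → (Fin k → ℝ)}
    (hH : ContDiff ℝ (⊤ : ℕ∞) H) : ContDiff ℝ (⊤ : ℕ∞) (fun y => c ⬝ᵥ H y) := by
  have h := (dotCLM c).contDiff.comp hH
  have e : (⇑(dotCLM c) ∘ H) = fun y => c ⬝ᵥ H y := funext fun y => dotCLM_apply c (H y)
  rwa [e] at h

lemma sum_dotProduct' {k : ℕ} {ι : Type*} (s : Finset ι) (u : ι → Fin k → ℝ)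
    (w : Fin k → ℝ) : (∑ i ∈ s, u i) ⬝ᵥ w = ∑ i ∈ s, u i ⬝ᵥ w := by
  simp only [dotProduct, Finset.sum_apply, Finset.sum_mul]
  rw [Finset.sum_comm]

lemma dotProduct_sum' {k : ℕ} {ι : Type*} (s : Finset ι) (w : Fin k → ℝ)
    (u : ι → Fin k → ℝ) : w ⬝ᵥ (∑ i ∈ s, u i) = ∑ i ∈ s, w ⬝ᵥ u i := by
  simp only [dotProduct, Finset.sum_apply, Finset.mul_sum]
  rw [Finset.sum_comm]

lemma sum_mulVec' {k l : ℕ} {ι : Type*} (s : Finset ι) (M : ι → Matrix (Fin k) (Fin l) ℝ)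
    (w : Fin l → ℝ) : (∑ i ∈ s, M i) *ᵥ w = ∑ i ∈ s, M i *ᵥ w := by
  funext j
  simp only [Matrix.mulVec, dotProduct, Finset.sum_apply, Matrix.sum_apply, Finset.sum_mul]
  rw [Finset.sum_comm]

section LieLemmas

variable {n : ℕ} {F : (Fin n → ℝ) → (Fin n → ℝ)}

lemma lieD_contDiff (hF : ContDiff ℝ (⊤ : ℕ∞) F) {φ : (Fin n → ℝ) → ℝ}
    (hφ : ContDiff ℝ (⊤ : ℕ∞) φ) : ContDiff ℝ (⊤ : ℕ∞) (lieD F φ) :=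
  (hφ.fderiv_right (le_refl _)).clm_apply hF

lemma lieD_iter_contDiff (hF : ContDiff ℝ (⊤ : ℕ∞) F) {φ : (Fin n → ℝ) → ℝ}
    (hφ : ContDiff ℝ (⊤ : ℕ∞) φ) : ∀ k, ContDiff ℝ (⊤ : ℕ∞) ((lieD F)^[k] φ)
  | 0 => hφ
  | (k+1) => by
      rw [Function.iterate_succ_apply']
      exact lieD_contDiff hF (lieD_iter_contDiff hF hφ k)

lemma lieD_add {φ ψ : (Fin n → ℝ) → ℝ} (hφ : Differentiable ℝ φ)
    (hψ : Differentiable ℝ ψ) (x : Fin n → ℝ) :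
    lieD F (fun y => φ y + ψ y) x = lieD F φ x + lieD F ψ x := by
  simp [lieD, fderiv_fun_add (hφ x) (hψ x)]

lemma lieD_const_mul {φ : (Fin n → ℝ) → ℝ} (hφ : Differentiable ℝ φ) (c : ℝ)
    (x : Fin n → ℝ) :
    lieD F (fun y => c * φ y) x = c * lieD F φ x := by
  simp [lieD, fderiv_const_mul (hφ x) c]

lemma lieD_sum {ι : Type*} {s : Finset ι} {f : ι → (Fin n → ℝ) → ℝ}
    (hf : ∀ j ∈ s, Differentiable ℝ (f j)) (x : Fin n → ℝ) :
    lieD F (fun y => ∑ j ∈ s, f j y) x = ∑ j ∈ s, lieD F (f j) x := by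
  simp [lieD, fderiv_fun_sum (fun j hj => (hf j hj) x)]

lemma lieD_iter_const_mul (hF : ContDiff ℝ (⊤ : ℕ∞) F) {φ : (Fin n → ℝ) → ℝ}
    (hφ : ContDiff ℝ (⊤ : ℕ∞) φ) (c : ℝ) :
    ∀ k, (lieD F)^[k] (fun y => c * φ y) = fun x => c * (lieD F)^[k] φ x
  | 0 => rfl
  | (k+1) => by
      rw [Function.iterate_succ_apply', lieD_iter_const_mul hF hφ c k,
        Function.iterate_succ_apply']
      funext x
      exact lieD_const_mul ((lieD_iter_contDiff hF hφ k).differentiable (by simp)) c x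

lemma lieD_iter_sum (hF : ContDiff ℝ (⊤ : ℕ∞) F) {ι : Type*} {s : Finset ι}
    {f : ι → (Fin n → ℝ) → ℝ} (hf : ∀ j ∈ s, ContDiff ℝ (⊤ : ℕ∞) (f j)) :
    ∀ k, (lieD F)^[k] (fun y => ∑ j ∈ s, f j y) = fun x => ∑ j ∈ s, (lieD F)^[k] (f j) x
  | 0 => rfl
  | (k+1) => by
      rw [Function.iterate_succ_apply', lieD_iter_sum hF hf k]
      funext x
      rw [lieD_sum (fun j hj => ((lieD_iter_contDiff hF (hf j hj) k).differentiable (by simp))) x]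
      exact Finset.sum_congr rfl fun j hj => by rw [Function.iterate_succ_apply']

lemma lieD_iter_add (hF : ContDiff ℝ (⊤ : ℕ∞) F) {φ ψ : (Fin n → ℝ) → ℝ}
    (hφ : ContDiff ℝ (⊤ : ℕ∞) φ) (hψ : ContDiff ℝ (⊤ : ℕ∞) ψ) :
    ∀ k, (lieD F)^[k] (fun y => φ y + ψ y) = fun x => (lieD F)^[k] φ x + (lieD F)^[k] ψ x
  | 0 => rfl
  | (k+1) => by
      rw [Function.iterate_succ_apply', lieD_iter_add hF hφ hψ k]
      funext x
      rw [lieD_add ((lieD_iter_contDiff hF hφ k).differentiable (by simp))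
        ((lieD_iter_contDiff hF hψ k).differentiable (by simp)) x,
        Function.iterate_succ_apply', Function.iterate_succ_apply']

end LieLemmas

/-- **Proposition 1, necessity.** If a C¹ map `T : ℝ^n → ℝ^v` and matrices
`A, B, C, D` satisfy `DT(x) F(x) = A T(x) + B H(x)` and `q(x) = C T(x) + D H(x)` for all
`x`, where the characteristic polynomial of `A` is `λ^v + α₁ λ^{v−1} + ⋯ + α_v`, then
`L_F^v q + α₁ L_F^{v−1} q + ⋯ + α_v q` is an ℝ-linear combination of the functions
`L_F^i H_j`: there are row vectors `β₀, …, β_v` with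
`L_F^v q + Σ_{i=1}^v α_i L_F^{v−i} q = Σ_{ℓ=0}^{v} L_F^{v−ℓ}(β_ℓ H)` pointwise. -/
theorem stmt4
    {n v p : ℕ}
    (F : (Fin n → ℝ) → (Fin n → ℝ)) (hF : ContDiff ℝ (⊤ : ℕ∞) F)
    (H : (Fin n → ℝ) → (Fin p → ℝ)) (hH : ContDiff ℝ (⊤ : ℕ∞) H)
    (q : (Fin n → ℝ) → ℝ) (hq : ContDiff ℝ (⊤ : ℕ∞) q)
    (α : ℕ → ℝ)
    (T : (Fin n → ℝ) → (Fin v → ℝ)) (hT : ContDiff ℝ 1 T)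
    (A : Matrix (Fin v) (Fin v) ℝ) (B : Matrix (Fin v) (Fin p) ℝ)
    (C : Fin v → ℝ) (D : Fin p → ℝ)
    (hchar : A.charpoly
      = Polynomial.X ^ v + ∑ i ∈ Finset.Icc 1 v, Polynomial.C (α i) * Polynomial.X ^ (v - i))
    (hPDE : ∀ x : Fin n → ℝ, fderiv ℝ T x (F x) = A.mulVec (T x) + B.mulVec (H x))
    (hOut : ∀ x : Fin n → ℝ, q x = C ⬝ᵥ T x + D ⬝ᵥ H x) :
    ∃ β : ℕ → (Fin p → ℝ), ∀ x : Fin n → ℝ,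
      (lieD F)^[v] q x + ∑ i ∈ Finset.Icc 1 v, α i * ((lieD F)^[v - i] q x)
        = ∑ ℓ ∈ Finset.range (v + 1), (lieD F)^[v - ℓ] (fun y => β ℓ ⬝ᵥ H y) x := by
  have hT' : Differentiable ℝ T := hT.differentiable one_ne_zero
  -- the coefficient vectors
  set δ : ℕ → Fin p → ℝ := fun j => if j = 0 then D else (C ᵥ* A ^ (j - 1)) ᵥ* B with hδ
  -- differentiability of dot products with T
  have hdiffT : ∀ c : Fin v → ℝ, Differentiable ℝ (fun y => c ⬝ᵥ T y) :=
    fun c x => (hasFDerivAt_dot c (hT' x).hasFDerivAt).differentiableAt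
  -- Lie derivative of dot products with T
  have hlieT : ∀ (c : Fin v → ℝ) (x : Fin n → ℝ),
      lieD F (fun y => c ⬝ᵥ T y) x = c ⬝ᵥ fderiv ℝ T x (F x) := by
    intro c x
    rw [lieD, (hasFDerivAt_dot c (hT' x).hasFDerivAt).fderiv]
    simp
  -- smoothness of dot products with H
  have hHdot : ∀ c : Fin p → ℝ, ContDiff ℝ (⊤ : ℕ∞) (fun y => c ⬝ᵥ H y) := fun c => contDiff_dot c hH
  -- the key structural formula for iterated Lie derivatives of q
  have key : ∀ k, (lieD F)^[k] q
      = fun x => (C ᵥ* A ^ k) ⬝ᵥ T x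
        + ∑ j ∈ Finset.range (k + 1), (lieD F)^[k - j] (fun y => δ j ⬝ᵥ H y) x := by
    intro k
    induction k with
    | zero =>
        funext x
        simpa [hδ] using hOut x
    | succ k ih =>
        funext x
        rw [Function.iterate_succ_apply', ih]
        have hgd : ∀ j ∈ Finset.range (k + 1),
            Differentiable ℝ ((lieD F)^[k - j] (fun y => δ j ⬝ᵥ H y)) :=
          fun j _ => (lieD_iter_contDiff hF (hHdot (δ j)) (k - j)).differentiable (by simp)
        have hgdiff : Differentiable ℝ
            (fun x => ∑ j ∈ Finset.range (k + 1), (lieD F)^[k - j] (fun y => δ j ⬝ᵥ H y) x) :=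
          Differentiable.fun_sum (fun j hj => hgd j hj)
        rw [lieD_add (hdiffT (C ᵥ* A ^ k)) hgdiff x, hlieT (C ᵥ* A ^ k) x, hPDE x,
          lieD_sum hgd x]
        have e1 : (C ᵥ* A ^ k) ⬝ᵥ (A *ᵥ T x + B *ᵥ H x)
            = (C ᵥ* A ^ (k + 1)) ⬝ᵥ T x + ((C ᵥ* A ^ k) ᵥ* B) ⬝ᵥ H x := by
          rw [dotProduct_add, dotProduct_mulVec, dotProduct_mulVec, vecMul_vecMul, ← pow_succ]
        have e2 : ∑ j ∈ Finset.range (k + 1), lieD F ((lieD F)^[k - j] (fun y => δ j ⬝ᵥ H y)) x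
            = ∑ j ∈ Finset.range (k + 1), (lieD F)^[k + 1 - j] (fun y => δ j ⬝ᵥ H y) x := by
          refine Finset.sum_congr rfl fun j hj => ?_
          have hjk : j ≤ k := Nat.lt_succ_iff.mp (Finset.mem_range.mp hj)
          have : k + 1 - j = (k - j) + 1 := by omega
          rw [this, Function.iterate_succ_apply']
        have e3 : (lieD F)^[k + 1 - (k + 1)] (fun y => δ (k + 1) ⬝ᵥ H y) x
            = ((C ᵥ* A ^ k) ᵥ* B) ⬝ᵥ H x := by
          simp [hδ]
        rw [e1, e2]
        conv_rhs => rw [Finset.sum_range_succ]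
        rw [e3]
        ring
  -- Cayley–Hamilton
  have hCH : A ^ v + ∑ i ∈ Finset.Icc 1 v, α i • A ^ (v - i) = 0 := by
    have h := Matrix.aeval_self_charpoly A
    rw [hchar, map_add, map_pow, aeval_X, map_sum] at h
    simpa [Algebra.smul_def] using h
  refine ⟨fun ℓ => δ ℓ + ∑ i ∈ Finset.Icc 1 ℓ, α i • δ (ℓ - i), fun x => ?_⟩
  -- abbreviation
  set g : ℕ → ℕ → ℝ := fun m j => (lieD F)^[m] (fun y => δ j ⬝ᵥ H y) x with hg
  -- rewrite LHS using key
  have hL : (lieD F)^[v] q x + ∑ i ∈ Finset.Icc 1 v, α i * ((lieD F)^[v - i] q x)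
      = ((C ᵥ* A ^ v) ⬝ᵥ T x + ∑ i ∈ Finset.Icc 1 v, α i * ((C ᵥ* A ^ (v - i)) ⬝ᵥ T x))
        + (∑ j ∈ Finset.range (v + 1), g (v - j) j
           + ∑ i ∈ Finset.Icc 1 v, α i * ∑ j ∈ Finset.range (v - i + 1), g (v - i - j) j) := by
    rw [key v]
    have : ∀ i ∈ Finset.Icc 1 v, α i * ((lieD F)^[v - i] q x)
        = α i * ((C ᵥ* A ^ (v - i)) ⬝ᵥ T x)
          + α i * ∑ j ∈ Finset.range (v - i + 1), g (v - i - j) j := by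
      intro i _
      rw [key (v - i)]
      ring
    rw [Finset.sum_congr rfl this, Finset.sum_add_distrib]
    ring
  -- the T-part vanishes by Cayley–Hamilton
  have hT0 : (C ᵥ* A ^ v) ⬝ᵥ T x + ∑ i ∈ Finset.Icc 1 v, α i * ((C ᵥ* A ^ (v - i)) ⬝ᵥ T x)
      = 0 := by
    have step : ∀ M : Matrix (Fin v) (Fin v) ℝ, (C ᵥ* M) ⬝ᵥ T x = C ⬝ᵥ M *ᵥ T x :=
      fun M => (dotProduct_mulVec C M (T x)).symm
    calc (C ᵥ* A ^ v) ⬝ᵥ T x + ∑ i ∈ Finset.Icc 1 v, α i * ((C ᵥ* A ^ (v - i)) ⬝ᵥ T x)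
        = C ⬝ᵥ ((A ^ v + ∑ i ∈ Finset.Icc 1 v, α i • A ^ (v - i)) *ᵥ T x) := by
          rw [add_mulVec, dotProduct_add, step]
          congr 1
          rw [sum_mulVec' (Finset.Icc 1 v) (fun i => α i • A ^ (v - i)) (T x),
            dotProduct_sum' (Finset.Icc 1 v) C (fun i => (α i • A ^ (v - i)) *ᵥ T x)]
          refine Finset.sum_congr rfl fun i _ => ?_
          rw [smul_mulVec, dotProduct_smul, smul_eq_mul, step]
    _ = 0 := by rw [hCH]; simp
  -- expand the RHS
  have hR : ∀ ℓ ∈ Finset.range (v + 1),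
      (lieD F)^[v - ℓ] (fun y => (δ ℓ + ∑ i ∈ Finset.Icc 1 ℓ, α i • δ (ℓ - i)) ⬝ᵥ H y) x
        = g (v - ℓ) ℓ + ∑ i ∈ Finset.Icc 1 ℓ, α i * g (v - ℓ) (ℓ - i) := by
    intro ℓ _
    have expand : (fun y => (δ ℓ + ∑ i ∈ Finset.Icc 1 ℓ, α i • δ (ℓ - i)) ⬝ᵥ H y)
        = fun y => (δ ℓ ⬝ᵥ H y) + ∑ i ∈ Finset.Icc 1 ℓ, α i * (δ (ℓ - i) ⬝ᵥ H y) := by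
      funext y
      rw [add_dotProduct, sum_dotProduct' (Finset.Icc 1 ℓ) (fun i => α i • δ (ℓ - i)) (H y)]
      congr 1
      exact Finset.sum_congr rfl fun i _ => by rw [smul_dotProduct, smul_eq_mul]
    rw [expand,
      lieD_iter_add hF (hHdot (δ ℓ))
        (ContDiff.sum (f := fun i y => α i * (δ (ℓ - i) ⬝ᵥ H y))
          fun i _ => contDiff_const.mul (hHdot (δ (ℓ - i)))) (v - ℓ)]
    beta_reduce
    have h3 : (lieD F)^[v - ℓ] (fun y => ∑ i ∈ Finset.Icc 1 ℓ, α i * (δ (ℓ - i) ⬝ᵥ H y)) x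
        = ∑ i ∈ Finset.Icc 1 ℓ, α i * g (v - ℓ) (ℓ - i) := by
      rw [lieD_iter_sum hF (f := fun i y => α i * (δ (ℓ - i) ⬝ᵥ H y))
        (fun i _ => contDiff_const.mul (hHdot (δ (ℓ - i)))) (v - ℓ)]
      exact Finset.sum_congr rfl fun i _ => by
        rw [lieD_iter_const_mul hF (hHdot (δ (ℓ - i))) (α i) (v - ℓ)]
    rw [h3]
  rw [hL, hT0, zero_add, Finset.sum_congr rfl hR, Finset.sum_add_distrib]
  congr 1
  -- the double-sum swap
  rw [Finset.sum_comm' (t' := Finset.Icc 1 v) (s' := fun i => Finset.Icc i v)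
    (by intro ℓ i; simp only [Finset.mem_range, Finset.mem_Icc]; omega)]
  refine Finset.sum_congr rfl fun i hi => ?_
  have hiv : 1 ≤ i ∧ i ≤ v := Finset.mem_Icc.mp hi
  rw [← Finset.mul_sum, ← Finset.Ico_add_one_right_eq_Icc, Finset.sum_Ico_eq_sum_range]
  congr 1
  rw [show v + 1 - i = v - i + 1 from by omega]
  refine Finset.sum_congr rfl fun j hj => ?_
  congr 1 <;> omega
end

section
/- (Disturbance decoupled error.) Consider the disturbed system dx/dt = F(x) + E(x) W(t), y = H(x) + K(x) W(t), z = q(x), and suppose the C¹ map T : ℝ^n → ℝ^v satisfies DT(x) F(x) = A T(x) + B H(x), q(x) = C T(x) + D H(x), together with the decoupling conditions DT(x) E(x) = B K(x) and D K(x) = 0 for all x ∈ ℝ^n. Then for every disturbance signal W : ℝ → ℝ^m, every solution x(·) of the disturbed state equation, and every solution ξ̂(·) of dξ̂/dt = A ξ̂ + B(H(x(t)) + K(x(t)) W(t)), the estimate ẑ(t) = C ξ̂(t) + D(H(x(t)) + K(x(t)) W(t)) satisfies ẑ(t) − q(x(t)) = C exp(tA)(ξ̂(0) − T(x(0))) for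 all t ≥ 0; in particular the estimation error is completely unaffected by W. -/
/-!
By the chain rule and the two conditions on `DT`, `t ↦ T (x t)` solves the observer equation
`d/dt T(x) = A T(x) + B y` driven by the same disturbed output `y = H(x) + K(x) W` as `ξ`.
So the error `e = ξ - T ∘ x` solves `ė = A e`, whence `e t = exp (t A) e 0`. Finally
`q = C T + D H` and `D K = 0` give `ẑ - q(x) = C e`.
-/

open Matrix

namespace Matrix

variable {ι : Type*} [Fintype ι] [DecidableEq ι]

attribute [local instance] Matrix.linftyOpNormedRing Matrix.linftyOpNormedAlgebra in
theorem hasDerivAt_exp_smul_mulVec (A : Matrix ι ι ℝ) (v : ι → ℝ) (t : ℝ) :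
    HasDerivAt (fun s : ℝ => NormedSpace.exp (s • A) *ᵥ v)
      (A *ᵥ (NormedSpace.exp (t • A) *ᵥ v)) t := by
  have h := (LinearMap.toContinuousLinearMap ((mulVecBilin ℝ ℝ).flip v)).hasFDerivAt
    |>.comp_hasDerivAt t (hasDerivAt_exp_smul_const' (𝕂 := ℝ) A t)
  rw [mulVec_mulVec]
  exact h

theorem eq_exp_smul_mulVec_of_hasDerivAt (A : Matrix ι ι ℝ) {e : ℝ → ι → ℝ}
    (he : ∀ t, HasDerivAt e (A *ᵥ e t) t) (t : ℝ) :
    e t = NormedSpace.exp (t • A) *ᵥ e 0 := by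
  have hA : LipschitzWith _ (LinearMap.toContinuousLinearMap A.mulVecLin) :=
    ContinuousLinearMap.lipschitz _
  have hunique := ODE_solution_unique_univ
    (v := fun _ => LinearMap.toContinuousLinearMap A.mulVecLin) (s := fun _ => Set.univ)
    (t₀ := 0) (fun _ => hA.lipschitzOnWith) (fun t => ⟨he t, trivial⟩)
    (fun t => ⟨hasDerivAt_exp_smul_mulVec A (e 0) t, trivial⟩)
    (by simp [NormedSpace.exp_zero])
  exact congrFun hunique t

end Matrix

theorem stmt6_general
    {n v p m : ℕ}
    (F : (Fin n → ℝ) → (Fin n → ℝ)) (H : (Fin n → ℝ) → (Fin p → ℝ))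
    (q : (Fin n → ℝ) → ℝ)
    (E : (Fin n → ℝ) → Matrix (Fin n) (Fin m) ℝ)
    (K : (Fin n → ℝ) → Matrix (Fin p) (Fin m) ℝ)
    (A : Matrix (Fin v) (Fin v) ℝ) (B : Matrix (Fin v) (Fin p) ℝ)
    (C : Fin v → ℝ) (D : Fin p → ℝ)
    (T : (Fin n → ℝ) → (Fin v → ℝ)) (hT : ContDiff ℝ 1 T)
    (hPDE : ∀ x : Fin n → ℝ, fderiv ℝ T x (F x) = A.mulVec (T x) + B.mulVec (H x))
    (hOut : ∀ x : Fin n → ℝ, q x = C ⬝ᵥ T x + D ⬝ᵥ H x)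
    (hdec1 : ∀ (x : Fin n → ℝ) (w : Fin m → ℝ),
      fderiv ℝ T x ((E x).mulVec w) = B.mulVec ((K x).mulVec w))
    (hdec2 : ∀ x : Fin n → ℝ, D ᵥ* K x = 0)
    (W : ℝ → (Fin m → ℝ))
    (x : ℝ → (Fin n → ℝ))
    (hx : ∀ t : ℝ, HasDerivAt x (F (x t) + (E (x t)).mulVec (W t)) t)
    (ξ : ℝ → (Fin v → ℝ))
    (hξ : ∀ t : ℝ, HasDerivAt ξ
      (A.mulVec (ξ t) + B.mulVec (H (x t) + (K (x t)).mulVec (W t))) t) :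
    ∀ t : ℝ, 0 ≤ t →
      (C ⬝ᵥ ξ t + D ⬝ᵥ (H (x t) + (K (x t)).mulVec (W t))) - q (x t)
        = C ⬝ᵥ (NormedSpace.exp (t • A)).mulVec (ξ 0 - T (x 0)) := by
  intro t _
  have hTx (s : ℝ) : HasDerivAt (fun s => T (x s))
      (A *ᵥ T (x s) + B *ᵥ (H (x s) + K (x s) *ᵥ W s)) s := by
    have h := (hT.differentiable one_ne_zero (x s)).hasFDerivAt.comp_hasDerivAt s (hx s)
    rw [map_add, hPDE, hdec1] at h
    rwa [mulVec_add, ← add_assoc]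
  have herr (s : ℝ) : HasDerivAt (fun s => ξ s - T (x s)) (A *ᵥ (ξ s - T (x s))) s := by
    rw [mulVec_sub, ← add_sub_add_right_eq_sub]
    exact (hξ s).fun_sub (hTx s)
  have hD : D ⬝ᵥ K (x t) *ᵥ W t = 0 := by
    rw [dotProduct_mulVec, hdec2, zero_dotProduct]
  rw [← eq_exp_smul_mulVec_of_hasDerivAt A herr t, hOut, dotProduct_add, hD, dotProduct_sub]
  ring

/-- **disturbance decoupled error.** For the disturbed system
`dx/dt = F(x) + E(x) W(t)`, `y = H(x) + K(x) W(t)`, `z = q(x)`, if the C¹ map `T`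
satisfies `DT(x) F(x) = A T(x) + B H(x)`, `q(x) = C T(x) + D H(x)` together with the
decoupling conditions `DT(x) E(x) = B K(x)` and `D K(x) = 0` for all `x`, then for every
disturbance `W`, every solution `x(·)` and every solution `ξ̂(·)` of
`dξ̂/dt = A ξ̂ + B y(t)` the estimate `ẑ(t) = C ξ̂(t) + D y(t)` satisfies
`ẑ(t) − q(x(t)) = C exp(t A)(ξ̂(0) − T(x(0)))` for all `t ≥ 0`: the estimation error is
completely unaffected by `W`. -/
theorem stmt6
    {n v p m : ℕ}
    (F : (Fin n → ℝ) → (Fin n → ℝ)) (H : (Fin n → ℝ) → (Fin p → ℝ))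
    (q : (Fin n → ℝ) → ℝ)
    (E : (Fin n → ℝ) → Matrix (Fin n) (Fin m) ℝ)
    (K : (Fin n → ℝ) → Matrix (Fin p) (Fin m) ℝ)
    (A : Matrix (Fin v) (Fin v) ℝ) (B : Matrix (Fin v) (Fin p) ℝ)
    (C : Fin v → ℝ) (D : Fin p → ℝ)
    (T : (Fin n → ℝ) → (Fin v → ℝ)) (hT : ContDiff ℝ 1 T)
    (hPDE : ∀ x : Fin n → ℝ, fderiv ℝ T x (F x) = A.mulVec (T x) + B.mulVec (H x))
    (hOut : ∀ x : Fin n → ℝ, q x = C ⬝ᵥ T x + D ⬝ᵥ H x)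
    (hdec1 : ∀ (x : Fin n → ℝ) (w : Fin m → ℝ),
      fderiv ℝ T x ((E x).mulVec w) = B.mulVec ((K x).mulVec w))
    (hdec2 : ∀ x : Fin n → ℝ, D ᵥ* K x = 0)
    (W : ℝ → (Fin m → ℝ)) (hW : Continuous W)
    (x : ℝ → (Fin n → ℝ))
    (hx : ∀ t : ℝ, HasDerivAt x (F (x t) + (E (x t)).mulVec (W t)) t)
    (ξ : ℝ → (Fin v → ℝ))
    (hξ : ∀ t : ℝ, HasDerivAt ξ
      (A.mulVec (ξ t) + B.mulVec (H (x t) + (K (x t)).mulVec (W t))) t) :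
    ∀ t : ℝ, 0 ≤ t →
      (C ⬝ᵥ ξ t + D ⬝ᵥ (H (x t) + (K (x t)).mulVec (W t))) - q (x t)
        = C ⬝ᵥ (NormedSpace.exp (t • A)).mulVec (ξ 0 - T (x 0)) :=
  stmt6_general F H q E K A B C D T hT hPDE hOut hdec1 hdec2 W x hx ξ hξ
end
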